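/- arXiv:2307.16886 — 6 statements merged into one kernel-verified Lean document; each statement's English description precedes it below -/
import Mathlib

section
/- Let γ:(0,1]→ℝ₊ be differentiable near 0, increasing, with lim_{x→0} γ(x)=0. Then the upper index ind^*(γ) := inf{α ≥ 0 : x^α = o(γ(x)) as x→0} satisfies ind^*(γ) ≤ limsup_{r→0} (r γ'(r)/γ(r)). -/
open Filter Topology Set

/-- The upper index `ind^*(γ)` of a function `γ` near `0` is bounded above by the limsup of
`r γ'(r)/γ(r)` as `r → 0+`. -/
theorem stmt1 (γ γ' : ℝ → ℝ)
    (hpos : ∀ x ∈ Set.Ioc (0:ℝ) 1, 0 < γ x)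
    (hmono : MonotoneOn γ (Set.Ioc (0:ℝ) 1))
    (hdiff : ∀ x ∈ Set.Ioo (0:ℝ) 1, HasDerivAt γ (γ' x) x)
    (hlim : Tendsto γ (𝓝[>] (0:ℝ)) (𝓝 0)) :
    sInf ((fun a : ℝ => (a : EReal)) ''
        {α : ℝ | 0 ≤ α ∧
          Tendsto (fun x : ℝ => x ^ α / γ x) (𝓝[>] (0:ℝ)) (𝓝 0)})
      ≤ Filter.limsup (fun r : ℝ => ((r * γ' r / γ r : ℝ) : EReal)) (𝓝[>] (0:ℝ)) := by
  set L := Filter.limsup (fun r : ℝ => ((r * γ' r / γ r : ℝ) : EReal)) (𝓝[>] (0:ℝ)) with hLdef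
  -- derivative is nonnegative on (0,1)
  have hγ'nonneg : ∀ x ∈ Set.Ioo (0:ℝ) 1, 0 ≤ γ' x := by
    intro x hx
    have h := ((hdiff x hx).hasDerivWithinAt (s := Set.Ioi x))
    rw [hasDerivWithinAt_iff_tendsto_slope' (notMem_Ioi.2 le_rfl)] at h
    refine ge_of_tendsto h ?_
    filter_upwards [Ioo_mem_nhdsGT_of_mem (⟨le_rfl, hx.2⟩ : x ∈ Set.Ico x 1)] with y hy
    have h1 : γ x ≤ γ y := hmono ⟨hx.1, hx.2.le⟩ ⟨hx.1.trans hy.1, hy.2.le⟩ hy.1.le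
    have h2 : (0:ℝ) < y - x := sub_pos.2 hy.1
    simp only [slope_def_field, div_eq_inv_mul]
    exact mul_nonneg (inv_nonneg.2 h2.le) (sub_nonneg.2 h1)
  have h0L : (0:EReal) ≤ L := by
    refine le_limsup_of_frequently_le (Filter.Eventually.frequently ?_)
    filter_upwards [Ioo_mem_nhdsGT_of_mem (⟨le_rfl, one_pos⟩ : (0:ℝ) ∈ Set.Ico (0:ℝ) 1)] with r hr
    exact_mod_cast div_nonneg (mul_nonneg hr.1.le (hγ'nonneg r hr)) (hpos r ⟨hr.1, hr.2.le⟩).le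
  -- key step
  have key : ∀ β : ℝ, L < (β:EReal) →
      0 ≤ β ∧ Tendsto (fun x : ℝ => x ^ β / γ x) (𝓝[>] (0:ℝ)) (𝓝 0) := by
    intro β hβ
    have hβ0 : 0 < β := by exact_mod_cast h0L.trans_lt hβ
    obtain ⟨β', hLβ', hβ'β'⟩ := EReal.exists_between_coe_real hβ
    have hβ'β : β' < β := by exact_mod_cast hβ'β'
    have hβ'0 : 0 < β' := by exact_mod_cast h0L.trans_lt hLβ'
    have hev : ∀ᶠ r in 𝓝[>] (0:ℝ), r * γ' r / γ r < β' := by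
      filter_upwards [eventually_lt_of_limsup_lt hLβ'] with r hr
      exact_mod_cast hr
    obtain ⟨δ, hδ0, hδ1, hδ⟩ : ∃ δ > 0, δ ≤ 1 ∧ ∀ r ∈ Set.Ioo (0:ℝ) δ, r * γ' r / γ r < β' := by
      obtain ⟨u, hu0, hsub⟩ := mem_nhdsGT_iff_exists_Ioo_subset.1 hev
      refine ⟨min u 1, lt_min hu0 one_pos, min_le_right _ _, fun r hr => hsub ⟨hr.1, hr.2.trans_le (min_le_left _ _)⟩⟩
    -- the function g r = γ r * r ^ (-β') is strictly antitone on (0, δ)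
    set g : ℝ → ℝ := fun r => γ r * r ^ (-β') with hgdef
    have hderiv : ∀ x ∈ Set.Ioo (0:ℝ) δ,
        HasDerivAt g (γ' x * x ^ (-β') + γ x * (-β' * x ^ (-β' - 1))) x := by
      intro x hx
      have hx1 : x ∈ Set.Ioo (0:ℝ) 1 := ⟨hx.1, hx.2.trans_le hδ1⟩
      exact (hdiff x hx1).mul (Real.hasDerivAt_rpow_const (Or.inl hx.1.ne'))
    have hanti : StrictAntiOn g (Set.Ioo (0:ℝ) δ) := by
      apply strictAntiOn_of_deriv_neg (convex_Ioo _ _)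
      · exact fun x hx => ((hderiv x hx).continuousAt).continuousWithinAt
      · rw [interior_Ioo]
        intro x hx
        rw [(hderiv x hx).deriv]
        have hx1 : x ∈ Set.Ioc (0:ℝ) 1 := ⟨hx.1, (hx.2.trans_le hδ1).le⟩
        have hγx : 0 < γ x := hpos x hx1
        have hlt : x * γ' x < β' * γ x := by
          have := hδ x hx
          rw [div_lt_iff₀ hγx] at this
          linarith
        have hxpow : x ^ (-β') = x * x ^ (-β' - 1) := by
          rw [← Real.rpow_one_add' hx.1.le (y := -β' - 1) (by simpa using hβ'0.ne')]
          ring_nf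
        rw [hxpow]
        have hpowpos : (0:ℝ) < x ^ (-β' - 1) := Real.rpow_pos_of_pos hx.1 _
        nlinarith
    -- lower bound γ x ≥ c * x ^ β' on (0, δ/2)
    set c : ℝ := g (δ/2) with hcdef
    have hc : 0 < c := by
      have : δ/2 ∈ Set.Ioc (0:ℝ) 1 := ⟨by linarith, by linarith⟩
      exact mul_pos (hpos _ this) (Real.rpow_pos_of_pos (by linarith) _)
    have hlb : ∀ x ∈ Set.Ioo (0:ℝ) (δ/2), c * x ^ β' ≤ γ x := by
      intro x hx
      have hx' : x ∈ Set.Ioo (0:ℝ) δ := ⟨hx.1, by linarith [hx.2]⟩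
      have hδ2 : δ/2 ∈ Set.Ioo (0:ℝ) δ := ⟨by linarith, by linarith⟩
      have hle : c ≤ γ x * x ^ (-β') := (hanti hx' hδ2 hx.2).le
      -- c ≤ γ x * x ^ (-β')
      have hxpow : (0:ℝ) < x ^ β' := Real.rpow_pos_of_pos hx.1 _
      have hxpow' : (0:ℝ) < x ^ (-β') := Real.rpow_pos_of_pos hx.1 _
      calc c * x ^ β' ≤ γ x * x ^ (-β') * x ^ β' := by nlinarith [hle]
        _ = γ x := by
            rw [mul_assoc, ← Real.rpow_add hx.1, neg_add_cancel, Real.rpow_zero, mul_one]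
    refine ⟨hβ0.le, ?_⟩
    -- squeeze
    have htend : Tendsto (fun x : ℝ => x ^ (β - β') / c) (𝓝[>] (0:ℝ)) (𝓝 0) := by
      have h1 : Tendsto (fun x : ℝ => x ^ (β - β')) (𝓝 (0:ℝ)) (𝓝 ((0:ℝ) ^ (β - β'))) :=
        (Real.continuousAt_rpow_const 0 _ (Or.inr (by linarith))).tendsto
      rw [Real.zero_rpow (sub_ne_zero.2 hβ'β.ne')] at h1
      have h2 := (h1.mono_left (nhdsWithin_le_nhds (s := Set.Ioi (0:ℝ)))).div_const c
      simpa using h2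
    apply squeeze_zero' ?_ ?_ htend
    · filter_upwards [Ioo_mem_nhdsGT_of_mem (⟨le_rfl, by linarith⟩ : (0:ℝ) ∈ Set.Ico (0:ℝ) (δ/2))] with x hx
      exact div_nonneg (Real.rpow_nonneg hx.1.le _) (hpos x ⟨hx.1, by linarith [hx.2]⟩).le
    · filter_upwards [Ioo_mem_nhdsGT_of_mem (⟨le_rfl, by linarith⟩ : (0:ℝ) ∈ Set.Ico (0:ℝ) (δ/2))] with x hx
      have hγx : 0 < γ x := hpos x ⟨hx.1, by linarith [hx.2]⟩
      have hlb' := hlb x hx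
      rw [div_le_div_iff₀ hγx hc]
      have hsplit : x ^ β = x ^ (β - β') * x ^ β' := by
        rw [← Real.rpow_add hx.1]; ring_nf
      rw [hsplit]
      calc x ^ (β - β') * x ^ β' * c = (c * x ^ β') * x ^ (β - β') := by ring
        _ ≤ γ x * x ^ (β - β') := by
            have : (0:ℝ) ≤ x ^ (β - β') := Real.rpow_nonneg hx.1.le _
            nlinarith
        _ = x ^ (β - β') * γ x := by ring
  -- conclude
  refine le_of_forall_gt_imp_ge_of_dense ?_
  intro a ha
  obtain ⟨β, hβ1, hβ2⟩ := EReal.exists_between_coe_real ha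
  exact le_trans (sInf_le ⟨β, key β hβ1, rfl⟩) hβ2.le
end

section
/- Let γ(x) = x^α L(x) on (0,x₀) where α ∈ (0,1] and L(x) = c·exp(∫_x^{x₀} ε(t)/t dt) with ε continuous, bounded, and ε(t)→0 as t→0 (normalized slowly varying). Then there exist constants c₈>0 and x₁ ∈ (0,1) such that ∫_0^{1/2} γ(xy)/(y√(log(1/y))) dy ≤ c₈ γ(x) for all x ∈ (0,x₁]. -/
/-!
Potter's bound: once `ε ≤ α / 2` on `(0, δ)`, the Karamata representation gives
`L(xy) ≤ y^{-α/2} L(x)` for `x < δ` and `y ≤ 1`, hence `γ(xy) ≤ y^{α/2} γ(x)`. Since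
`√(log (1/y)) ≥ √(log 2)` on `(0, 1/2]`, the integrand is at most
`γ(x) y^{α/2 - 1} / √(log 2)`, whose integral is a constant multiple of `γ(x)`.
-/

open Filter Topology Set MeasureTheory intervalIntegral

lemma intervalIntegrable_of_continuousOn_Ioo_of_abs_le {f : ℝ → ℝ} {a b M : ℝ} (hab : a ≤ b)
    (hf : ContinuousOn f (Ioo a b)) (hM : ∀ t ∈ Ioo a b, |f t| ≤ M) :
    IntervalIntegrable f volume a b := by
  rw [intervalIntegrable_iff_integrableOn_Ioo_of_le hab]
  exact IntegrableOn.of_bound measure_Ioo_lt_top (hf.aestronglyMeasurable measurableSet_Ioo) M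
    ((ae_restrict_iff' measurableSet_Ioo).2 (ae_of_all _ hM))

lemma intervalIntegrable_div_id {ε : ℝ → ℝ} {x₀ M a b : ℝ}
    (hεc : ContinuousOn ε (Ioo 0 x₀)) (hM : ∀ t ∈ Ioo 0 x₀, |ε t| ≤ M)
    (ha : 0 < a) (hab : a ≤ b) (hb : b ≤ x₀) :
    IntervalIntegrable (fun t => ε t / t) volume a b := by
  have hsub : Ioo a b ⊆ Ioo 0 x₀ := Ioo_subset_Ioo ha.le hb
  refine intervalIntegrable_of_continuousOn_Ioo_of_abs_le (M := M / a) hab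
    ((hεc.mono hsub).div continuousOn_id fun t ht => (ha.trans ht.1).ne') fun t ht => ?_
  rw [abs_div, abs_of_pos (ha.trans ht.1)]
  exact div_le_div₀ ((abs_nonneg _).trans (hM t (hsub ht))) (hM t (hsub ht)) ha ht.1.le

lemma integral_div_id_le_mul_log {ε : ℝ → ℝ} {η a b : ℝ} (ha : 0 < a) (hab : a ≤ b)
    (hint : IntervalIntegrable (fun t => ε t / t) volume a b) (hη : ∀ t ∈ Icc a b, ε t ≤ η) :
    ∫ t in a..b, ε t / t ≤ η * Real.log (b / a) := by
  have hpos : ∀ t ∈ uIcc a b, 0 < t := fun t ht => ha.trans_le (uIcc_of_le hab ▸ ht).1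
  calc ∫ t in a..b, ε t / t
      ≤ ∫ t in a..b, η * t⁻¹ :=
        integral_mono_on hab hint
          ((intervalIntegrable_inv (fun t ht => (hpos t ht).ne') continuousOn_id).const_mul η)
          fun t ht => div_le_div_of_nonneg_right (hη t ht) (ha.trans_le ht.1).le
    _ = η * Real.log (b / a) := by
        rw [intervalIntegral.integral_const_mul, integral_inv_of_pos ha (ha.trans_le hab)]

/-- The normalized slowly varying function `L` of the paper, in Karamata's representation. -/
noncomputable def karamataRep (c x₀ : ℝ) (ε : ℝ → ℝ) (u : ℝ) : ℝ :=
  c * Real.exp (∫ t in u..x₀, ε t / t)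

lemma karamataRep_mul_le {c x₀ η x y : ℝ} {ε : ℝ → ℝ} (hc : 0 ≤ c) (hx : 0 < x)
    (hy : y ∈ Ioc 0 1)
    (hnear : IntervalIntegrable (fun t => ε t / t) volume (x * y) x)
    (hfar : IntervalIntegrable (fun t => ε t / t) volume x x₀)
    (hη : ∀ t ∈ Icc (x * y) x, ε t ≤ η) :
    karamataRep c x₀ ε (x * y) ≤ y ^ (-η) * karamataRep c x₀ ε x := by
  have hnear_le : Real.exp (∫ t in (x * y)..x, ε t / t) ≤ y ^ (-η) := by
    rw [← Real.exp_log (Real.rpow_pos_of_pos hy.1 (-η)), Real.exp_le_exp]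
    calc ∫ t in (x * y)..x, ε t / t
        ≤ η * Real.log (x / (x * y)) :=
          integral_div_id_le_mul_log (mul_pos hx hy.1)
            (mul_le_of_le_one_right hx.le hy.2) hnear hη
      _ = Real.log (y ^ (-η)) := by
          rw [Real.log_rpow hy.1, div_mul_cancel_left₀ hx.ne', Real.log_inv]; ring
  unfold karamataRep
  rw [← integral_add_adjacent_intervals hnear hfar, Real.exp_add]
  calc c * (Real.exp (∫ t in (x * y)..x, ε t / t) * Real.exp (∫ t in x..x₀, ε t / t))
      = c * Real.exp (∫ t in x..x₀, ε t / t) * Real.exp (∫ t in (x * y)..x, ε t / t) := by ring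
    _ ≤ c * Real.exp (∫ t in x..x₀, ε t / t) * y ^ (-η) := by gcongr
    _ = y ^ (-η) * (c * Real.exp (∫ t in x..x₀, ε t / t)) := by ring

lemma potter_bound {α c x₀ M η x y : ℝ} {ε γ : ℝ → ℝ} (hc : 0 ≤ c)
    (hεc : ContinuousOn ε (Ioo 0 x₀)) (hM : ∀ t ∈ Ioo 0 x₀, |ε t| ≤ M)
    (hγ : ∀ u ∈ Ioo 0 x₀, γ u = u ^ α * karamataRep c x₀ ε u)
    (hx : x ∈ Ioo 0 x₀) (hy : y ∈ Ioc 0 1) (hη : ∀ t ∈ Icc (x * y) x, ε t ≤ η) :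
    γ (x * y) ≤ y ^ (α - η) * γ x := by
  have hxy : x * y ≤ x := mul_le_of_le_one_right hx.1.le hy.2
  have hxy₀ : 0 < x * y := mul_pos hx.1 hy.1
  rw [hγ _ ⟨hxy₀, hxy.trans_lt hx.2⟩, hγ x hx, Real.mul_rpow hx.1.le hy.1.le,
    Real.rpow_sub hy.1]
  have hL := karamataRep_mul_le hc hx.1 hy
    (intervalIntegrable_div_id hεc hM hxy₀ hxy hx.2.le)
    (intervalIntegrable_div_id hεc hM hx.1 hx.2.le le_rfl) hη
  rw [Real.rpow_neg hy.1.le] at hL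
  calc x ^ α * y ^ α * karamataRep c x₀ ε (x * y)
      ≤ x ^ α * y ^ α * ((y ^ η)⁻¹ * karamataRep c x₀ ε x) :=
        mul_le_mul_of_nonneg_left hL
          (mul_nonneg (Real.rpow_nonneg hx.1.le _) (Real.rpow_nonneg hy.1.le _))
    _ = y ^ α / y ^ η * (x ^ α * karamataRep c x₀ ε x) := by ring

lemma integral_div_mul_sqrt_log_le {g : ℝ → ℝ} {K β : ℝ} (hβ : 0 < β)
    (hg : ∀ y ∈ Ioc (0 : ℝ) (1 / 2), 0 ≤ g y ∧ g y ≤ K * y ^ β) :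
    ∫ y in (0 : ℝ)..(1 / 2), g y / (y * Real.sqrt (Real.log (1 / y)))
      ≤ (1 / 2) ^ β / (β * Real.sqrt (Real.log 2)) * K := by
  have hlog2 : 0 < Real.sqrt (Real.log 2) := Real.sqrt_pos.2 (Real.log_pos one_lt_two)
  have hrpow : ∫ y in (0 : ℝ)..(1 / 2), y ^ (β - 1) = (1 / 2) ^ β / β := by
    rw [integral_rpow (Or.inl (by linarith)), sub_add_cancel, Real.zero_rpow hβ.ne', sub_zero]
  have hint : IntervalIntegrable (fun y : ℝ => K / Real.sqrt (Real.log 2) * y ^ (β - 1))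
      volume 0 (1 / 2) := (intervalIntegrable_rpow' (by linarith)).const_mul _
  have hbound : ∀ y ∈ Ioc (0 : ℝ) (1 / 2), g y / (y * Real.sqrt (Real.log (1 / y)))
      ≤ K / Real.sqrt (Real.log 2) * y ^ (β - 1) := by
    rintro y ⟨hy, hy2⟩
    have hlog : Real.sqrt (Real.log 2) ≤ Real.sqrt (Real.log (1 / y)) :=
      Real.sqrt_le_sqrt (Real.log_le_log two_pos ((le_one_div two_pos hy).2 hy2))
    calc g y / (y * Real.sqrt (Real.log (1 / y)))
        ≤ K * y ^ β / (y * Real.sqrt (Real.log 2)) := by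
          gcongr
          · exact (hg y ⟨hy, hy2⟩).1.trans (hg y ⟨hy, hy2⟩).2
          · exact (hg y ⟨hy, hy2⟩).2
      _ = K / Real.sqrt (Real.log 2) * y ^ (β - 1) := by
          rw [Real.rpow_sub_one hy.ne']; field_simp
  calc ∫ y in (0 : ℝ)..(1 / 2), g y / (y * Real.sqrt (Real.log (1 / y)))
      ≤ ∫ y in (0 : ℝ)..(1 / 2), K / Real.sqrt (Real.log 2) * y ^ (β - 1) := by
        rw [integral_of_le one_half_pos.le, integral_of_le one_half_pos.le]
        refine integral_mono_of_nonneg ?_ hint.1 ?_ <;>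
          filter_upwards [ae_restrict_mem measurableSet_Ioc] with y hy
        · exact div_nonneg (hg y hy).1 (mul_nonneg hy.1.le (Real.sqrt_nonneg _))
        · exact hbound y hy
    _ = (1 / 2) ^ β / (β * Real.sqrt (Real.log 2)) * K := by
        rw [intervalIntegral.integral_const_mul, hrpow]; field_simp

theorem stmt3_general (α c x₀ : ℝ) (hα : 0 < α)
    (hx₀ : x₀ ∈ Set.Ioo (0:ℝ) 1) (hc : 0 < c)
    (ε : ℝ → ℝ)
    (hεc : ContinuousOn ε (Set.Ioo (0:ℝ) x₀))
    (hεb : ∃ M : ℝ, ∀ t ∈ Set.Ioo (0:ℝ) x₀, |ε t| ≤ M)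
    (hε0 : Tendsto ε (𝓝[>] (0:ℝ)) (𝓝 0))
    (γ : ℝ → ℝ)
    (hγ : ∀ x ∈ Set.Ioo (0:ℝ) x₀,
      γ x = x ^ α * (c * Real.exp (∫ t in x..x₀, ε t / t))) :
    ∃ c₈ > 0, ∃ x₁ ∈ Set.Ioo (0:ℝ) 1, ∀ x ∈ Set.Ioc (0:ℝ) x₁,
      (∫ y in (0:ℝ)..(1/2), γ (x * y) / (y * Real.sqrt (Real.log (1/y))))
        ≤ c₈ * γ x := by
  obtain ⟨M, hM⟩ := hεb
  obtain ⟨δ, hδ, hεδ⟩ := mem_nhdsGT_iff_exists_Ioo_subset.1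
    (hε0.eventually_lt_const (half_pos hα))
  have hx₁ : min (δ / 2) (x₀ / 2) < min δ x₀ :=
    min_lt_min (half_lt_self hδ) (half_lt_self hx₀.1)
  refine ⟨_, by positivity, min (δ / 2) (x₀ / 2),
    ⟨lt_min (half_pos hδ) (half_pos hx₀.1), (min_le_right _ _).trans_lt (by linarith [hx₀.2])⟩,
    fun x hx => integral_div_mul_sqrt_log_le (half_pos hα) fun y hy => ?_⟩
  have hxδ : x < min δ x₀ := hx.2.trans_lt hx₁
  have hxx₀ : x ∈ Ioo 0 x₀ := ⟨hx.1, hxδ.trans_le (min_le_right _ _)⟩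
  have hy1 : y ∈ Ioc 0 1 := ⟨hy.1, hy.2.trans one_half_lt_one.le⟩
  have hxy : x * y ∈ Ioo 0 x₀ :=
    ⟨mul_pos hx.1 hy.1, (mul_le_of_le_one_right hx.1.le hy1.2).trans_lt hxx₀.2⟩
  refine ⟨by
    rw [hγ _ hxy]
    exact mul_nonneg (Real.rpow_nonneg hxy.1.le _) (mul_nonneg hc.le (Real.exp_pos _).le), ?_⟩
  have hbound := potter_bound hc.le hεc hM hγ hxx₀ hy1 (η := α / 2) fun t ht =>
    (hεδ ⟨hxy.1.trans_le ht.1, ht.2.trans_lt (hxδ.trans_le (min_le_left _ _))⟩).le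
  rwa [sub_half, mul_comm _ (γ x)] at hbound

/-- A regularly varying function `γ(x) = x^α L(x)` of index `α ∈ (0,1]`, with `L` normalized
slowly varying, satisfies condition (C₀):
`∫_0^{1/2} γ(xy)/(y √(log(1/y))) dy ≤ c₈ γ(x)` for all small `x`. -/
theorem stmt3 (α c x₀ : ℝ) (hα : 0 < α) (hα1 : α ≤ 1)
    (hx₀ : x₀ ∈ Set.Ioo (0:ℝ) 1) (hc : 0 < c)
    (ε : ℝ → ℝ)
    (hεc : ContinuousOn ε (Set.Ioo (0:ℝ) x₀))
    (hεb : ∃ M : ℝ, ∀ t ∈ Set.Ioo (0:ℝ) x₀, |ε t| ≤ M)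
    (hε0 : Tendsto ε (𝓝[>] (0:ℝ)) (𝓝 0))
    (γ : ℝ → ℝ)
    (hγ : ∀ x ∈ Set.Ioo (0:ℝ) x₀,
      γ x = x ^ α * (c * Real.exp (∫ t in x..x₀, ε t / t))) :
    ∃ c₈ > 0, ∃ x₁ ∈ Set.Ioo (0:ℝ) 1, ∀ x ∈ Set.Ioc (0:ℝ) x₁,
      (∫ y in (0:ℝ)..(1/2), γ (x * y) / (y * Real.sqrt (Real.log (1/y))))
        ≤ c₈ * γ x :=
  stmt3_general α c x₀ hα hx₀ hc ε hεc hεb hε0 γ hγ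
end

section
/- Let q ∈ (0,1) and γ_q(x) := exp(−(log(1/x))^q) for x ∈ (0,1]. Then for every ε > 0 there exist constants c_ε > 0 and x_ε ∈ (0,1) such that ∫_0^{1/2} γ_q(xy)/(y√(log(1/y))) dy ≤ c_ε · (γ_q(x))^{1−ε} for all 0 < x < x_ε. -/
open Filter Topology Set MeasureTheory intervalIntegral

/-! With `a = log (1/x)` and `b = log (1/y)`, the power `(a + b) ^ q` dominates both `a ^ q` and
`b ^ q`, hence every convex combination `(1 - θ) a ^ q + θ b ^ q`; so
`γ_q(xy) ≤ γ_q(x) ^ (1 - θ) · exp (-θ b ^ q)`. As `b ^ (3/2) · exp (-θ b ^ q)` is bounded, what remains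
is at most a constant times `∫_0^{1/2} dy / (y log² y) = 1 / log 2`. -/

lemma convex_comb_rpow_le_add_rpow {q θ a b : ℝ} (hq : 0 ≤ q) (hθ0 : 0 ≤ θ) (hθ1 : θ ≤ 1)
    (ha : 0 ≤ a) (hb : 0 ≤ b) : (1 - θ) * a ^ q + θ * b ^ q ≤ (a + b) ^ q := by
  have hla : a ^ q ≤ (a + b) ^ q := Real.rpow_le_rpow ha (by linarith) hq
  have hlb : b ^ q ≤ (a + b) ^ q := Real.rpow_le_rpow hb (by linarith) hq
  nlinarith

lemma exp_neg_add_rpow_le {q θ a b : ℝ} (hq : 0 ≤ q) (hθ0 : 0 ≤ θ) (hθ1 : θ ≤ 1)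
    (ha : 0 ≤ a) (hb : 0 ≤ b) :
    Real.exp (-(a + b) ^ q) ≤ Real.exp (-a ^ q) ^ (1 - θ) * Real.exp (-θ * b ^ q) := by
  rw [← Real.exp_mul, ← Real.exp_add, Real.exp_le_exp]
  linarith [convex_comb_rpow_le_add_rpow hq hθ0 hθ1 ha hb]

lemma exists_rpow_mul_exp_neg_mul_rpow_le {p q δ : ℝ} (hp : 0 ≤ p) (hq : 0 < q) (hδ : 0 < δ) :
    ∃ C > 0, ∀ t ≥ 0, t ^ p * Real.exp (-δ * t ^ q) ≤ C := by
  obtain ⟨U, hU⟩ := eventually_atTop.1 <|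
    (tendsto_rpow_mul_exp_neg_mul_atTop_nhds_zero (p / q) δ hδ).eventually (gt_mem_nhds one_pos)
  refine ⟨max 1 (max U 0 ^ (p / q)), by positivity, fun t ht => ?_⟩
  have hu : 0 ≤ t ^ q := Real.rpow_nonneg ht q
  have hsubst : t ^ p = (t ^ q) ^ (p / q) := by
    rw [← Real.rpow_mul ht, mul_div_cancel₀ _ hq.ne']
  rw [hsubst]
  rcases le_total U (t ^ q) with hUt | htU
  · exact (hU _ hUt).le.trans (le_max_left _ _)
  · calc (t ^ q) ^ (p / q) * Real.exp (-δ * t ^ q) ≤ max U 0 ^ (p / q) * 1 := by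
          gcongr
          · exact le_max_of_le_left htU
          · rw [Real.exp_le_one_iff, neg_mul, neg_nonpos]; positivity
      _ ≤ _ := by rw [mul_one]; exact le_max_right _ _

lemma hasDerivAt_neg_inv_log {y : ℝ} (hy : y ≠ 0) (hlog : Real.log y ≠ 0) :
    HasDerivAt (fun y => -(Real.log y)⁻¹) (y * Real.log y ^ 2)⁻¹ y := by
  refine ((Real.hasDerivAt_log hy).inv hlog).neg.congr_deriv ?_
  rw [neg_div, neg_neg, div_eq_mul_inv, mul_inv]

lemma continuousOn_neg_inv_log {c : ℝ} (hc : c < 1) :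
    ContinuousOn (fun y => -(Real.log y)⁻¹) (Icc 0 c) := by
  intro y hy
  refine ContinuousAt.continuousWithinAt (ContinuousAt.neg ?_)
  rcases hy.1.eq_or_lt with rfl | hy0
  · -- at `0` the junk value `(log 0)⁻¹ = 0` is the limit, since `log` tends to `-∞`
    rw [← continuousWithinAt_compl_self, ContinuousWithinAt, Real.log_zero, inv_zero]
    exact Real.tendsto_log_nhdsNE_zero.inv_tendsto_atBot
  · exact (Real.continuousAt_log hy0.ne').inv₀ (Real.log_neg hy0 (hy.2.trans_lt hc)).ne

lemma integrableOn_inv_mul_log_sq {c : ℝ} (hc : c < 1) :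
    IntegrableOn (fun y => (y * Real.log y ^ 2)⁻¹) (Ioc 0 c) :=
  integrableOn_deriv_of_nonneg (continuousOn_neg_inv_log hc)
    (fun y hy => hasDerivAt_neg_inv_log hy.1.ne' (Real.log_neg hy.1 (hy.2.trans hc)).ne)
    (fun y hy => by have := hy.1; positivity)

lemma integral_inv_mul_log_sq {c : ℝ} (hc0 : 0 ≤ c) (hc1 : c < 1) :
    ∫ y in (0:ℝ)..c, (y * Real.log y ^ 2)⁻¹ = -(Real.log c)⁻¹ := by
  rw [integral_eq_sub_of_hasDerivAt_of_le hc0 (continuousOn_neg_inv_log hc1)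
    (fun y hy => hasDerivAt_neg_inv_log hy.1.ne' (Real.log_neg hy.1 (hy.2.trans hc1)).ne)
    ((intervalIntegrable_iff_integrableOn_Ioc_of_le hc0).2 (integrableOn_inv_mul_log_sq hc1))]
  simp

lemma exp_neg_rpow_log_mul_div_le {q θ C x y : ℝ} (hq : 0 ≤ q) (hθ0 : 0 ≤ θ) (hθ1 : θ ≤ 1)
    (hC : ∀ t ≥ 0, t ^ (3/2 : ℝ) * Real.exp (-θ * t ^ q) ≤ C)
    (hx0 : 0 < x) (hx1 : x ≤ 1) (hy0 : 0 < y) (hy1 : y < 1) :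
    Real.exp (-(Real.log (1/(x*y))) ^ q) / (y * Real.sqrt (Real.log (1/y)))
      ≤ Real.exp (-(Real.log (1/x)) ^ q) ^ (1 - θ) * C * (y * Real.log y ^ 2)⁻¹ := by
  set a := Real.log (1/x)
  set b := Real.log (1/y) with hb
  have ha0 : 0 ≤ a := Real.log_nonneg (one_le_one_div hx0 hx1)
  have hb0 : 0 < b := Real.log_pos (one_lt_one_div hy0 hy1)
  have hab : Real.log (1/(x*y)) = a + b := by
    simp only [a, b, one_div, mul_inv, Real.log_mul (inv_ne_zero hx0.ne') (inv_ne_zero hy0.ne')]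
  have hlog_sq : Real.log y ^ 2 = b ^ 2 := by rw [hb, one_div, Real.log_inv, neg_sq]
  have hpow : Real.sqrt b * b ^ (3/2 : ℝ) = b ^ 2 := by
    rw [Real.sqrt_eq_rpow, ← Real.rpow_add hb0, ← Real.rpow_natCast]; norm_num
  set K := Real.exp (-a ^ q) ^ (1 - θ)
  calc Real.exp (-(Real.log (1/(x*y))) ^ q) / (y * Real.sqrt b)
      ≤ K * Real.exp (-θ * b ^ q) / (y * Real.sqrt b) := by
        rw [hab]; gcongr; exact exp_neg_add_rpow_le hq hθ0 hθ1 ha0 hb0.le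
    _ = K * (b ^ (3/2 : ℝ) * Real.exp (-θ * b ^ q)) * (y * b ^ 2)⁻¹ := by
        rw [← hpow]; field_simp
    _ ≤ K * C * (y * Real.log y ^ 2)⁻¹ := by
        rw [hlog_sq]; gcongr; exact hC b hb0.le

lemma integral_le_mul_neg_inv_log {f : ℝ → ℝ} {M c : ℝ} (hc0 : 0 ≤ c) (hc1 : c < 1)
    (hf0 : ∀ y ∈ Ioc 0 c, 0 ≤ f y) (hf : ∀ y ∈ Ioc 0 c, f y ≤ M * (y * Real.log y ^ 2)⁻¹) :
    ∫ y in (0:ℝ)..c, f y ≤ M * -(Real.log c)⁻¹ := by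
  rw [← integral_inv_mul_log_sq hc0 hc1, ← intervalIntegral.integral_const_mul,
    integral_of_le hc0, integral_of_le hc0]
  exact integral_mono_of_nonneg ((ae_restrict_iff' measurableSet_Ioc).2 (ae_of_all _ hf0))
    ((integrableOn_inv_mul_log_sq hc1).const_mul M)
    ((ae_restrict_iff' measurableSet_Ioc).2 (ae_of_all _ hf))

/-- For `q ∈ (0,1)`, the function `γ_q(x) = exp(−(log(1/x))^q)` satisfies condition (C_{0+}):
for every `ε > 0` there are `c_ε > 0` and `x_ε ∈ (0,1)` with
`∫_0^{1/2} γ_q(xy)/(y √(log(1/y))) dy ≤ c_ε (γ_q(x))^{1−ε}` for all `0 < x < x_ε`. -/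
theorem stmt6 (q : ℝ) (hq : q ∈ Set.Ioo (0:ℝ) 1) :
    ∀ ε > (0:ℝ), ∃ cε > (0:ℝ), ∃ xε ∈ Set.Ioo (0:ℝ) 1, ∀ x : ℝ, 0 < x → x < xε →
      (∫ y in (0:ℝ)..(1/2),
          Real.exp (-(Real.log (1/(x*y))) ^ q) / (y * Real.sqrt (Real.log (1/y))))
        ≤ cε * (Real.exp (-(Real.log (1/x)) ^ q)) ^ (1 - ε) := by
  intro ε hε
  set θ := min ε 1
  have hθ0 : 0 < θ := lt_min hε one_pos
  have hθε : θ ≤ ε := min_le_left _ _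
  obtain ⟨C, hC0, hC⟩ := exists_rpow_mul_exp_neg_mul_rpow_le (p := 3/2) (by norm_num) hq.1 hθ0
  refine ⟨C / Real.log 2, by positivity, 1/2, by norm_num, fun x hx0 hx => ?_⟩
  set γ := Real.exp (-(Real.log (1/x)) ^ q)
  have hγ1 : γ ≤ 1 := by
    rw [Real.exp_le_one_iff, neg_nonpos]
    exact Real.rpow_nonneg (Real.log_nonneg (one_le_one_div hx0 (by linarith))) q
  calc (∫ y in (0:ℝ)..(1/2),
          Real.exp (-(Real.log (1/(x*y))) ^ q) / (y * Real.sqrt (Real.log (1/y))))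
      ≤ γ ^ (1 - θ) * C * -(Real.log (1/2))⁻¹ := by
        refine integral_le_mul_neg_inv_log (by norm_num) (by norm_num)
          (fun y hy => by have := hy.1; positivity) (fun y hy => ?_)
        exact exp_neg_rpow_log_mul_div_le hq.1.le hθ0.le (min_le_right _ _) hC hx0 (by linarith)
          hy.1 (by linarith [hy.2])
    _ = C / Real.log 2 * γ ^ (1 - θ) := by
        rw [one_div, Real.log_inv, inv_neg, neg_neg]
        ring
    _ ≤ C / Real.log 2 * γ ^ (1 - ε) := by
        refine mul_le_mul_of_nonneg_left ?_ (by positivity)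
        exact Real.rpow_le_rpow_of_exponent_ge (Real.exp_pos _) hγ1 (by linarith)
end

section
/- Let γ be continuous, increasing, and concave near the origin with γ(0)=0, and suppose ind_*(γ) > 0. Then for every ε ∈ (0,1) there exist c_ε > 0 and x_ε ∈ (0,1/2] such that ∫_0^{1/2} γ(xy)/(y√(log(1/y))) dy ≤ c_ε (γ(x))^{1−ε} for all x ∈ (0, x_ε]. -/
/-!
Write `t = γ x`. As `γ` is nondecreasing, `γ (x y) ≤ t`, and as `γ s ≤ s ^ α` near `0`, also
`γ (x y) ≤ y ^ α`; moreover `log (1 / y) ≥ log 2` on `(0, 1/2]`. Splitting the integral at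
`δ = exp (-u)` with `u = t ^ (-ε)`, and using the second bound below `δ` and the first above it,
gives `√(log 2) · ∫ ≤ δ ^ α / α + t u = exp (-α u) / α + t ^ (1 - ε)`. Finally
`exp (-α u) ≤ t ^ (1 - ε) = u ^ (-(1 - ε) / ε)` once `t` is small, since exponential decay in `u`
beats every power of `u`.
-/

open Filter Topology Set MeasureTheory intervalIntegral Real

theorem eventually_exp_neg_mul_rpow_neg_le_rpow {α ε : ℝ} (hα : 0 < α) (hε : 0 < ε) (p : ℝ) :
    ∀ᶠ t in 𝓝[>] (0 : ℝ), exp (-(α * t ^ (-ε))) ≤ t ^ p := by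
  have hle : ∀ᶠ u in atTop, u ^ (p / ε) * exp (-α * u) ≤ 1 :=
    (tendsto_rpow_mul_exp_neg_mul_atTop_nhds_zero _ _ hα).eventually (eventually_le_nhds one_pos)
  filter_upwards [(tendsto_rpow_neg_nhdsGT_zero (neg_neg_of_pos hε)).eventually
    (hle.and (eventually_gt_atTop 0)), self_mem_nhdsWithin] with t ⟨hbound, hu⟩ ht
  have hp : t ^ p = ((t ^ (-ε)) ^ (p / ε))⁻¹ := by
    rw [← rpow_mul ht.out.le, ← rpow_neg ht.out.le]
    field_simp
  rw [hp, le_inv_comm₀ (exp_pos _) (rpow_pos_of_pos hu _), ← exp_neg, neg_neg]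
  rwa [neg_mul, exp_neg, ← div_eq_mul_inv, div_le_one (exp_pos _)] at hbound

theorem eventually_le_rpow_of_tendsto_div_rpow {f : ℝ → ℝ} {α : ℝ}
    (h : Tendsto (fun x => f x / x ^ α) (𝓝[>] 0) (𝓝 0)) : ∀ᶠ x in 𝓝[>] 0, f x ≤ x ^ α := by
  filter_upwards [h.eventually (eventually_le_nhds one_pos), self_mem_nhdsWithin] with x hfx hx
  exact (div_le_one (rpow_pos_of_pos hx _)).mp hfx

theorem exists_forall_Ioc_of_eventually_nhdsGT {p : ℝ → Prop} (h : ∀ᶠ x in 𝓝[>] (0 : ℝ), p x)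
    {c : ℝ} (hc : 0 < c) : ∃ x₀ ∈ Ioc 0 c, ∀ x ∈ Ioc 0 x₀, p x := by
  obtain ⟨x₀, hx₀, hsub⟩ := mem_nhdsGT_iff_exists_Ioc_subset.mp h
  exact ⟨min x₀ c, ⟨lt_min hx₀ hc, min_le_right _ _⟩,
    fun x hx => hsub ⟨hx.1, hx.2.trans (min_le_left _ _)⟩⟩

theorem MonotoneOn.apply_mul_mem_Icc {γ : ℝ → ℝ} {a x y : ℝ} (hmono : MonotoneOn γ (Icc 0 a))
    (hγ0 : γ 0 = 0) (hx : x ∈ Icc 0 a) (hy : y ∈ Icc 0 1) : γ (x * y) ∈ Icc 0 (γ x) := by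
  have hxyx : x * y ≤ x := mul_le_of_le_one_right hx.1 hy.2
  have hxy : x * y ∈ Icc 0 a := ⟨mul_nonneg hx.1 hy.1, hxyx.trans hx.2⟩
  exact ⟨hγ0 ▸ hmono ⟨le_rfl, hx.1.trans hx.2⟩ hxy hxy.1, hmono hxy hx hxyx⟩

theorem apply_mul_le_rpow {γ : ℝ → ℝ} {α x₀ x y : ℝ} (hα : 0 ≤ α)
    (hγ : ∀ s ∈ Ioc 0 x₀, γ s ≤ s ^ α) (hx : x ∈ Ioc 0 x₀) (hx1 : x ≤ 1) (hy : y ∈ Ioc 0 1) :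
    γ (x * y) ≤ y ^ α :=
  calc γ (x * y) ≤ (x * y) ^ α :=
        hγ _ ⟨mul_pos hx.1 hy.1, (mul_le_of_le_one_right hx.1.le hy.2).trans hx.2⟩
    _ = x ^ α * y ^ α := mul_rpow hx.1.le hy.1.le
    _ ≤ y ^ α := mul_le_of_le_one_left (rpow_nonneg hy.1.le _) (rpow_le_one hx.1.le hx1 hα)

theorem integral_le_add_of_nonneg_of_le {f g h : ℝ → ℝ} {a b c : ℝ} (hac : a ≤ c) (hcb : c ≤ b)
    (hf : ∀ y ∈ Ioo a b, 0 ≤ f y) (hgi : IntervalIntegrable g volume a c)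
    (hhi : IntervalIntegrable h volume c b) (hfg : ∀ y ∈ Ioo a c, f y ≤ g y)
    (hfh : ∀ y ∈ Ioo c b, f y ≤ h y) :
    ∫ y in a..b, f y ≤ (∫ y in a..c, g y) + ∫ y in c..b, h y := by
  by_cases hfi : IntervalIntegrable f volume a b
  · have hc : c ∈ uIcc a b := mem_uIcc_of_le hac hcb
    have hfac := hfi.mono_set (uIcc_subset_uIcc left_mem_uIcc hc)
    have hfcb := hfi.mono_set (uIcc_subset_uIcc hc right_mem_uIcc)
    rw [← integral_add_adjacent_intervals hfac hfcb]
    exact add_le_add (integral_mono_on_of_le_Ioo hac hfac hgi hfg)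
      (integral_mono_on_of_le_Ioo hcb hfcb hhi hfh)
  · have hnonneg {k : ℝ → ℝ} {a' b' : ℝ} (hab' : a' ≤ b') (hsub : Ioo a' b' ⊆ Ioo a b)
        (hki : IntervalIntegrable k volume a' b') (hfk : ∀ y ∈ Ioo a' b', f y ≤ k y) :
        0 ≤ ∫ y in a'..b', k y := by
      simpa using integral_mono_on_of_le_Ioo hab' intervalIntegrable_const hki
        fun y hy => (hf y (hsub hy)).trans (hfk y hy)
    rw [integral_undef hfi]
    exact add_nonneg (hnonneg hac (Ioo_subset_Ioo_right hcb) hgi hfg)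
      (hnonneg hcb (Ioo_subset_Ioo_left hac) hhi hfh)

theorem div_mul_sqrt_log_inv_le {v w y : ℝ} (hy : y ∈ Ioc 0 (1 / 2)) (hv : 0 ≤ v) (hvw : v ≤ w) :
    v / (y * √(log (1 / y))) ≤ (√(log 2))⁻¹ * (w / y) := by
  have hlog : log 2 ≤ log (1 / y) :=
    log_le_log two_pos (by rw [le_div_iff₀ hy.1]; linarith [hy.2])
  have hden : y * √(log 2) ≤ y * √(log (1 / y)) :=
    mul_le_mul_of_nonneg_left (sqrt_le_sqrt hlog) hy.1.le
  calc v / (y * √(log (1 / y))) ≤ w / (y * √(log 2)) :=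
        div_le_div₀ (hv.trans hvw) hvw (mul_pos hy.1 (sqrt_pos.mpr (log_pos one_lt_two))) hden
    _ = (√(log 2))⁻¹ * (w / y) := by field_simp

theorem integral_div_mul_sqrt_log_inv_le {g : ℝ → ℝ} {α t u : ℝ} (hα : 0 < α) (hu : log 2 ≤ u)
    (hg0 : ∀ y ∈ Ioo 0 (1 / 2), 0 ≤ g y) (hgt : ∀ y ∈ Ioo 0 (1 / 2), g y ≤ t)
    (hgα : ∀ y ∈ Ioo 0 (1 / 2), g y ≤ y ^ α) :
    ∫ y in (0 : ℝ)..(1 / 2), g y / (y * √(log (1 / y)))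
      ≤ (√(log 2))⁻¹ * (exp (-(α * u)) / α + t * u) := by
  set δ := exp (-u)
  have hδ : δ ∈ Ioc 0 (1 / 2) := by
    refine ⟨exp_pos _, ?_⟩
    calc δ ≤ exp (-log 2) := exp_le_exp.mpr (neg_le_neg hu)
      _ = 1 / 2 := by rw [exp_neg, exp_log two_pos, one_div]
  have ht : 0 ≤ t :=
    (hg0 (1 / 4) ⟨by norm_num, by norm_num⟩).trans (hgt _ ⟨by norm_num, by norm_num⟩)
  have hbelow : ∫ y in (0 : ℝ)..δ, y ^ (α - 1) = exp (-(α * u)) / α := by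
    rw [integral_rpow (Or.inl (by linarith)), sub_add_cancel, zero_rpow hα.ne', sub_zero,
      ← exp_mul, neg_mul, mul_comm]
  have habove : ∫ y in δ..(1 / 2), y⁻¹ = u - log 2 := by
    rw [integral_inv_of_pos hδ.1 one_half_pos, log_div one_half_pos.ne' hδ.1.ne', log_exp,
      one_div, log_inv]
    ring
  calc ∫ y in (0 : ℝ)..(1 / 2), g y / (y * √(log (1 / y)))
      ≤ (∫ y in (0 : ℝ)..δ, (√(log 2))⁻¹ * y ^ (α - 1))
        + ∫ y in δ..(1 / 2), (√(log 2))⁻¹ * (t * y⁻¹) := by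
        refine integral_le_add_of_nonneg_of_le hδ.1.le hδ.2 (fun y hy => ?_) ?_ ?_
          (fun y hy => ?_) (fun y hy => ?_)
        · exact div_nonneg (hg0 y hy) (mul_nonneg hy.1.le (sqrt_nonneg _))
        · exact (intervalIntegral.intervalIntegrable_rpow' (by linarith)).const_mul _
        · refine ((intervalIntegrable_inv_iff.mpr (Or.inr ?_)).const_mul t).const_mul _
          rw [uIcc_of_le hδ.2]
          exact fun h0 => hδ.1.not_ge h0.1
        · have hy' : y ∈ Ioo 0 (1 / 2) := ⟨hy.1, hy.2.trans_le hδ.2⟩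
          rw [rpow_sub_one hy.1.ne']
          exact div_mul_sqrt_log_inv_le (Ioo_subset_Ioc_self hy') (hg0 y hy') (hgα y hy')
        · have hy' : y ∈ Ioo 0 (1 / 2) := ⟨hδ.1.trans hy.1, hy.2⟩
          rw [← div_eq_mul_inv]
          exact div_mul_sqrt_log_inv_le (Ioo_subset_Ioc_self hy') (hg0 y hy') (hgt y hy')
    _ = (√(log 2))⁻¹ * (exp (-(α * u)) / α + t * (u - log 2)) := by
        rw [intervalIntegral.integral_const_mul, intervalIntegral.integral_const_mul,
          intervalIntegral.integral_const_mul, hbelow, habove]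
        ring
    _ ≤ (√(log 2))⁻¹ * (exp (-(α * u)) / α + t * u) := by
        gcongr
        linarith [log_pos one_lt_two]

theorem stmt7_general (γ : ℝ → ℝ) (a : ℝ) (ha : 0 < a)
    (hmono : MonotoneOn γ (Set.Icc (0:ℝ) a))
    (hγ0 : γ 0 = 0)
    (hind : ∃ α > (0:ℝ),
      Tendsto (fun x : ℝ => γ x / x ^ α) (𝓝[>] (0:ℝ)) (𝓝 0)) :
    ∀ ε ∈ Set.Ioo (0:ℝ) 1, ∃ cε > (0:ℝ), ∃ xε ∈ Set.Ioc (0:ℝ) (1/2 : ℝ),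
      ∀ x ∈ Set.Ioc (0:ℝ) xε,
        (∫ y in (0:ℝ)..(1/2), γ (x * y) / (y * Real.sqrt (Real.log (1/y))))
          ≤ cε * (γ x) ^ (1 - ε) := by
  rintro ε ⟨hε0, hε1⟩
  obtain ⟨α, hα, htend⟩ := hind
  obtain ⟨t₀, ⟨ht₀, -⟩, hsmall_t⟩ := exists_forall_Ioc_of_eventually_nhdsGT
    ((eventually_exp_neg_mul_rpow_neg_le_rpow hα hε0 (1 - ε)).and
      ((tendsto_rpow_neg_nhdsGT_zero (neg_neg_of_pos hε0)).eventually
        (eventually_ge_atTop (log 2)))) one_pos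
  have hnear : ∀ᶠ x in 𝓝 (0 : ℝ), x ≤ a ∧ x ^ α < t₀ :=
    (eventually_le_nhds ha).and ((continuousAt_rpow_const 0 α (Or.inr hα.le)).eventually_lt
      continuousAt_const (by rwa [zero_rpow hα.ne']))
  obtain ⟨xε, hxε, hsmall_x⟩ := exists_forall_Ioc_of_eventually_nhdsGT
    ((eventually_nhdsWithin_of_eventually_nhds hnear).and
      (eventually_le_rpow_of_tendsto_div_rpow htend)) one_half_pos
  refine ⟨(√(log 2))⁻¹ * (α⁻¹ + 1), by positivity, xε, hxε, fun x hx => ?_⟩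
  obtain ⟨⟨hxa, hxt₀⟩, hγx⟩ := hsmall_x x hx
  have hxIcc : x ∈ Icc 0 a := ⟨hx.1.le, hxa⟩
  have hIoo : Ioo (0 : ℝ) (1 / 2) ⊆ Icc 0 1 := fun y hy => ⟨hy.1.le, by linarith [hy.2]⟩
  have hγ_rpow : ∀ y ∈ Ioo 0 (1 / 2), γ (x * y) ≤ y ^ α := fun y hy =>
    apply_mul_le_rpow hα.le (fun s hs => (hsmall_x s hs).2) hx (by linarith [hx.2, hxε.2])
      ⟨hy.1, (hIoo hy).2⟩
  rcases (hγ0 ▸ hmono ⟨le_rfl, ha.le⟩ hxIcc hx.1.le : 0 ≤ γ x).eq_or_lt with h0 | hpos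
  · have hzero : EqOn (fun y => γ (x * y) / (y * √(log (1 / y)))) 0 (uIcc 0 (1 / 2)) := by
      intro y hy
      rw [uIcc_of_le one_half_pos.le] at hy
      have hγxy := hmono.apply_mul_mem_Icc hγ0 hxIcc ⟨hy.1, by linarith [hy.2]⟩
      simp [le_antisymm (hγxy.2.trans h0.ge) hγxy.1]
    rw [integral_congr hzero, ← h0, zero_rpow (sub_ne_zero.mpr hε1.ne')]
    simp
  · obtain ⟨hexp, hlog⟩ := hsmall_t (γ x) ⟨hpos, hγx.trans hxt₀.le⟩
    have hmul : γ x * γ x ^ (-ε) = γ x ^ (1 - ε) := by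
      rw [sub_eq_add_neg, rpow_add hpos, rpow_one]
    calc _ ≤ (√(log 2))⁻¹ * (exp (-(α * γ x ^ (-ε))) / α + γ x * γ x ^ (-ε)) :=
          integral_div_mul_sqrt_log_inv_le hα hlog
            (fun y hy => (hmono.apply_mul_mem_Icc hγ0 hxIcc (hIoo hy)).1)
            (fun y hy => (hmono.apply_mul_mem_Icc hγ0 hxIcc (hIoo hy)).2) hγ_rpow
      _ ≤ (√(log 2))⁻¹ * (γ x ^ (1 - ε) / α + γ x ^ (1 - ε)) := by
          rw [hmul]
          gcongr
      _ = (√(log 2))⁻¹ * (α⁻¹ + 1) * γ x ^ (1 - ε) := by ring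

/-- If `γ` is continuous, increasing, concave near the origin with `γ(0)=0` and positive lower
index (`γ(x) = o(x^α)` for some `α > 0`), then `γ` satisfies condition (C_{0+}). -/
theorem stmt7 (γ : ℝ → ℝ) (a : ℝ) (ha : 0 < a) (ha1 : a ≤ 1)
    (hcont : ContinuousOn γ (Set.Icc (0:ℝ) a))
    (hmono : MonotoneOn γ (Set.Icc (0:ℝ) a))
    (hconc : ConcaveOn ℝ (Set.Icc (0:ℝ) a) γ)
    (hγ0 : γ 0 = 0)
    (hind : ∃ α > (0:ℝ),
      Tendsto (fun x : ℝ => γ x / x ^ α) (𝓝[>] (0:ℝ)) (𝓝 0)) :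
    ∀ ε ∈ Set.Ioo (0:ℝ) 1, ∃ cε > (0:ℝ), ∃ xε ∈ Set.Ioc (0:ℝ) (1/2 : ℝ),
      ∀ x ∈ Set.Ioc (0:ℝ) xε,
        (∫ y in (0:ℝ)..(1/2), γ (x * y) / (y * Real.sqrt (Real.log (1/y))))
          ≤ cε * (γ x) ^ (1 - ε) :=
  stmt7_general γ a ha hmono hγ0 hind
end

section
/- Let ζ ∈ (0,d), u > 0, and v ∈ ℝ^d with 0 < ‖v‖ ≤ u. Then ∫_{ℝ^d} ‖u·x + v‖^{−ζ} (2π)^{−d/2} e^{−‖x‖²/2} dx ≤ c₁ u^{−ζ}, where c₁ = 2(2π)^{−d/2} ∫_{ℝ^d} ‖x‖^{−ζ} e^{−‖x‖²/2} dx < ∞. -/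
open MeasureTheory Set
open scoped ENNReal

open Metric Module

private lemma lintegral_fun_norm_addHaar
    {E : Type*} [NormedAddCommGroup E] [NormedSpace ℝ E] [Nontrivial E]
    [MeasurableSpace E] [BorelSpace E] [FiniteDimensional ℝ E]
    (μ : Measure E) [μ.IsAddHaarMeasure] (F : ℝ → ℝ≥0∞) (hF : Measurable F) :
    ∫⁻ x, F ‖x‖ ∂μ
      = μ.toSphere univ *
        ∫⁻ y in Ioi (0:ℝ), ENNReal.ofReal (y ^ (finrank ℝ E - 1)) * F y := by
  have h1 : ∫⁻ x, F ‖x‖ ∂μ = ∫⁻ x : ({0}ᶜ : Set E), F ‖(x : E)‖ ∂(μ.comap (↑)) := by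
    rw [lintegral_subtype_comap (measurableSet_singleton (0:E)).compl
        (fun x => F ‖x‖), MeasureTheory.restrict_compl_singleton]
  have h2 := (μ.measurePreserving_homeomorphUnitSphereProd).lintegral_comp
      (f := fun p : sphere (0:E) 1 × Ioi (0:ℝ) => F p.2)
      (hF.comp (measurable_subtype_coe.comp measurable_snd))
  simp only [homeomorphUnitSphereProd_apply_snd_coe] at h2
  rw [h1, h2]
  rw [lintegral_prod (f := fun b : sphere (0:E) 1 × Ioi (0:ℝ) => F b.2)
      ((hF.comp (measurable_subtype_coe.comp measurable_snd)).aemeasurable)]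
  simp only [lintegral_const]
  rw [mul_comm]
  congr 1
  have h3 := lintegral_withDensity_eq_lintegral_mul
      (Measure.comap (Subtype.val) (volume : Measure ℝ))
      (f := fun r : Ioi (0:ℝ) => ENNReal.ofReal (r.1 ^ (finrank ℝ E - 1)))
      ((measurable_subtype_coe.pow_const _).ennreal_ofReal)
      (g := fun y : Ioi (0:ℝ) => F y) (hF.comp measurable_subtype_coe)
  rw [Measure.volumeIoiPow, h3]
  rw [← lintegral_subtype_comap measurableSet_Ioi
      (fun y => ENNReal.ofReal (y ^ (finrank ℝ E - 1)) * F y)]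
  rfl

private lemma aux_fin {E : Type*} [NormedAddCommGroup E] [NormedSpace ℝ E] [Nontrivial E]
    [MeasurableSpace E] [BorelSpace E] [FiniteDimensional ℝ E]
    (μ : Measure E) [μ.IsAddHaarMeasure] (ζ c : ℝ) (hζ0 : 0 < ζ)
    (hζd : ζ < (finrank ℝ E : ℝ)) :
    (∫⁻ x : E, ENNReal.ofReal (‖x‖ ^ (-ζ) * (c * Real.exp (-‖x‖^2/2))) ∂μ) < ⊤ := by
  have hd : 0 < finrank ℝ E := by
    by_contra h
    push_neg at h
    interval_cases h' : finrank ℝ E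
    · simp [h'] at hζd; linarith
  have hFm : Measurable (fun r : ℝ => ENNReal.ofReal (r ^ (-ζ) * (c * Real.exp (-r^2/2)))) := by
    fun_prop
  rw [show (∫⁻ x : E, ENNReal.ofReal (‖x‖ ^ (-ζ) * (c * Real.exp (-‖x‖^2/2))) ∂μ)
      = ∫⁻ x : E, (fun r : ℝ => ENNReal.ofReal (r ^ (-ζ) * (c * Real.exp (-r^2/2)))) ‖x‖ ∂μ
      from rfl,
    lintegral_fun_norm_addHaar μ _ hFm]
  apply ENNReal.mul_lt_top (measure_lt_top _ _)
  have hs : (-1 : ℝ) < ((finrank ℝ E - 1 : ℕ) : ℝ) - ζ := by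
    have : ((finrank ℝ E - 1 : ℕ) : ℝ) = (finrank ℝ E : ℝ) - 1 := by
      push_cast [Nat.cast_sub hd]; ring
    rw [this]; linarith
  have hInt : IntegrableOn
      (fun y : ℝ => |c| * (y ^ (((finrank ℝ E - 1 : ℕ) : ℝ) - ζ) * Real.exp (-(1/2) * y^2)))
      (Ioi 0) :=
    (integrableOn_rpow_mul_exp_neg_mul_sq (by norm_num : (0:ℝ) < 1/2) hs).const_mul _
  have heq : ∀ y ∈ Ioi (0:ℝ),
      ENNReal.ofReal (y ^ (finrank ℝ E - 1)) *
        ENNReal.ofReal (y ^ (-ζ) * (c * Real.exp (-y^2/2)))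
      ≤ ENNReal.ofReal (|c| * (y ^ (((finrank ℝ E - 1 : ℕ) : ℝ) - ζ) * Real.exp (-(1/2) * y^2))) := by
    intro y hy
    have hy0 : 0 < y := mem_Ioi.mp hy
    rw [← ENNReal.ofReal_mul (pow_nonneg hy0.le _)]
    apply ENNReal.ofReal_le_ofReal
    have hle : c ≤ |c| := le_abs_self c
    have hexp : -(1/2) * y^2 = -y^2/2 := by ring
    rw [show (((finrank ℝ E - 1 : ℕ) : ℝ) - ζ) = ((finrank ℝ E - 1 : ℕ) : ℝ) + (-ζ) by ring,
      Real.rpow_add hy0, Real.rpow_natCast, hexp]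
    have h1 : 0 ≤ y ^ (finrank ℝ E - 1) * y ^ (-ζ) * Real.exp (-y^2/2) := by positivity
    calc y ^ (finrank ℝ E - 1) * (y ^ (-ζ) * (c * Real.exp (-y^2/2)))
        = c * (y ^ (finrank ℝ E - 1) * y ^ (-ζ) * Real.exp (-y^2/2)) := by ring
      _ ≤ |c| * (y ^ (finrank ℝ E - 1) * y ^ (-ζ) * Real.exp (-y^2/2)) :=
          mul_le_mul_of_nonneg_right hle h1
      _ = |c| * (y ^ (finrank ℝ E - 1) * y ^ (-ζ) * Real.exp (-y^2/2)) := rfl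
      _ = _ := by ring
  calc (∫⁻ y in Ioi (0:ℝ), ENNReal.ofReal (y ^ (finrank ℝ E - 1)) *
          (fun r : ℝ => ENNReal.ofReal (r ^ (-ζ) * (c * Real.exp (-r^2/2)))) y)
      ≤ ∫⁻ y in Ioi (0:ℝ),
          ENNReal.ofReal (|c| * (y ^ (((finrank ℝ E - 1 : ℕ) : ℝ) - ζ) * Real.exp (-(1/2) * y^2))) :=
        setLIntegral_mono' measurableSet_Ioi heq
    _ < ⊤ := hInt.setLIntegral_lt_top

/-- Gaussian integral bound: for `ζ ∈ (0,d)`, `0 < ‖v‖ ≤ u`,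
`∫ ‖u x + v‖^{−ζ} (2π)^{−d/2} e^{−‖x‖²/2} dx ≤ c₁ u^{−ζ}` with
`c₁ = 2 (2π)^{−d/2} ∫ ‖x‖^{−ζ} e^{−‖x‖²/2} dx < ∞`. -/
theorem stmt12 (d : ℕ) (ζ : ℝ) (hζ : ζ ∈ Set.Ioo (0:ℝ) (d:ℝ))
    (u : ℝ) (hu : 0 < u) (v : EuclideanSpace ℝ (Fin d))
    (hv : 0 < ‖v‖) (hvu : ‖v‖ ≤ u) :
    (∫⁻ x : EuclideanSpace ℝ (Fin d),
        ENNReal.ofReal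
          (‖u • x + v‖ ^ (-ζ) * ((2*Real.pi) ^ (-(d:ℝ)/2) * Real.exp (-‖x‖^2/2))))
      ≤ ENNReal.ofReal (u ^ (-ζ)) *
        (2 * ∫⁻ x : EuclideanSpace ℝ (Fin d),
          ENNReal.ofReal
            (‖x‖ ^ (-ζ) * ((2*Real.pi) ^ (-(d:ℝ)/2) * Real.exp (-‖x‖^2/2)))) ∧
    (2 * ∫⁻ x : EuclideanSpace ℝ (Fin d),
        ENNReal.ofReal
          (‖x‖ ^ (-ζ) * ((2*Real.pi) ^ (-(d:ℝ)/2) * Real.exp (-‖x‖^2/2)))) < ⊤ := by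
  obtain ⟨hζ0, hζd⟩ := hζ
  have hd : 0 < d := by exact_mod_cast hζ0.trans hζd
  haveI : Nonempty (Fin d) := Fin.pos_iff_nonempty.mp hd
  haveI : Nontrivial (EuclideanSpace ℝ (Fin d)) := by infer_instance
  have hc0 : 0 < (2*Real.pi) ^ (-(d:ℝ)/2) := Real.rpow_pos_of_pos (by positivity) _
  have hJfin : (∫⁻ x : EuclideanSpace ℝ (Fin d),
      ENNReal.ofReal
        (‖x‖ ^ (-ζ) * ((2*Real.pi) ^ (-(d:ℝ)/2) * Real.exp (-‖x‖^2/2)))) < ⊤ := by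
    apply aux_fin volume ζ _ hζ0
    rwa [finrank_euclideanSpace_fin]
  refine ⟨?_, ENNReal.mul_lt_top (by norm_num) hJfin⟩
  set c : ℝ := (2*Real.pi) ^ (-(d:ℝ)/2) with hc
  set w : EuclideanSpace ℝ (Fin d) := u⁻¹ • v with hw
  have hnorm : ∀ x : EuclideanSpace ℝ (Fin d),
      ‖u • x + v‖ ^ (-ζ) = u ^ (-ζ) * ‖x + w‖ ^ (-ζ) := by
    intro x
    have h1 : u • x + v = u • (x + w) := by
      rw [smul_add, hw, smul_smul, mul_inv_cancel₀ hu.ne', one_smul]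
    rw [h1, norm_smul, Real.norm_eq_abs, abs_of_pos hu,
      Real.mul_rpow hu.le (norm_nonneg _)]
  have hLHS : (∫⁻ x : EuclideanSpace ℝ (Fin d),
      ENNReal.ofReal (‖u • x + v‖ ^ (-ζ) * (c * Real.exp (-‖x‖^2/2))))
      = ENNReal.ofReal (u ^ (-ζ)) *
        ∫⁻ x : EuclideanSpace ℝ (Fin d),
          ENNReal.ofReal (‖x + w‖ ^ (-ζ) * (c * Real.exp (-‖x‖^2/2))) := by
    rw [← lintegral_const_mul' _ _ ENNReal.ofReal_ne_top]
    congr 1 with x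
    rw [hnorm x, mul_assoc, ENNReal.ofReal_mul (Real.rpow_nonneg hu.le _)]
  rw [hLHS]
  apply mul_le_mul_right
  have hFm : Measurable (fun x : EuclideanSpace ℝ (Fin d) =>
      ENNReal.ofReal (‖x‖ ^ (-ζ) * (c * Real.exp (-‖x‖^2/2)))) := by fun_prop
  have key : (∫⁻ x : EuclideanSpace ℝ (Fin d),
        ENNReal.ofReal (‖x + w‖ ^ (-ζ) * (c * Real.exp (-‖x‖^2/2))))
      ≤ (∫⁻ x : EuclideanSpace ℝ (Fin d),
          (ENNReal.ofReal (‖x‖ ^ (-ζ) * (c * Real.exp (-‖x‖^2/2)))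
            + ENNReal.ofReal (‖x + w‖ ^ (-ζ) * (c * Real.exp (-‖x + w‖^2/2))))) := by
    apply lintegral_mono_ae
    filter_upwards [(Set.countable_singleton (0 : EuclideanSpace ℝ (Fin d))).ae_notMem volume]
      with x hx
    have hx0 : 0 < ‖x‖ := norm_pos_iff.mpr (by simpa using hx)
    rcases le_or_gt ‖x‖ ‖x + w‖ with h | h
    · refine le_trans (ENNReal.ofReal_le_ofReal ?_) le_self_add
      apply mul_le_mul_of_nonneg_right _ (by positivity)
      exact Real.rpow_le_rpow_of_nonpos hx0 h (neg_nonpos.mpr hζ0.le)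
    · refine le_trans (ENNReal.ofReal_le_ofReal ?_) le_add_self
      apply mul_le_mul_of_nonneg_left _ (Real.rpow_nonneg (norm_nonneg _) _)
      apply mul_le_mul_of_nonneg_left _ hc0.le
      apply Real.exp_le_exp.mpr
      have h2 : ‖x + w‖^2 ≤ ‖x‖^2 := pow_le_pow_left₀ (norm_nonneg _) h.le 2
      linarith
  rw [lintegral_add_left hFm] at key
  rw [lintegral_add_right_eq_self
      (fun y : EuclideanSpace ℝ (Fin d) =>
        ENNReal.ofReal (‖y‖ ^ (-ζ) * (c * Real.exp (-‖y‖^2/2)))) w] at key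
  rw [two_mul]
  exact key
end

section
/- Let ζ ∈ (0,d) and w ∈ ℝ^d with ‖w‖ ≥ 1. Then ∫_{ℝ^d} ‖x + w‖^{−ζ} (2π)^{−d/2} e^{−‖x‖²/2} dx ≤ c ‖w‖^{−ζ} for a constant c depending only on d and ζ. -/
/-!
Split the integral at the ball `B(-w, ‖w‖/2)`. Off that ball `‖x + w‖^{-ζ} ≤ 2^ζ ‖w‖^{-ζ}`, and
what remains is the Gaussian mass. On the ball `‖x‖ ≥ ‖w‖/2`, so the Gaussian factor is at most
`e^{-‖w‖²/8}`, while `‖·‖^{-ζ}` is integrable on the unit ball (`ζ < d`) and at most `1` outside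
it, so its integral over `B(0, ‖w‖/2)` is `O(‖w‖^d)`; since `‖w‖^{d+ζ} e^{-‖w‖²/8}` is bounded,
this part is `O(‖w‖^{-ζ})` as well.
-/

open MeasureTheory Set Metric Module
open scoped ENNReal

section RpowNegNorm

variable {E : Type*} [NormedAddCommGroup E] [MeasurableSpace E] [BorelSpace E] (μ : Measure E)

theorem integrableOn_ball_rpow_neg_norm [NormedSpace ℝ E] [FiniteDimensional ℝ E]
    [Nontrivial E] [μ.IsAddHaarMeasure] {ζ : ℝ} (hζ : ζ < finrank ℝ E) (r : ℝ) :
    IntegrableOn (fun x : E => ‖x‖ ^ (-ζ)) (ball 0 r) μ := by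
  rcases le_or_gt r 0 with hr | hr
  · simp [ball_eq_empty.mpr hr]
  rw [integrableOn_fun_norm_addHaar μ (f := fun y => y ^ (-ζ))]
  have hd : 1 ≤ finrank ℝ E := finrank_pos
  refine ((intervalIntegral.integrableOn_Ioo_rpow_iff (s := (finrank ℝ E - 1 : ℕ) + -ζ)
    hr).mpr ?_).congr_fun (fun y hy => ?_) measurableSet_Ioo
  · push_cast [hd]
    linarith
  · simp only [Real.rpow_add hy.1, Real.rpow_natCast, smul_eq_mul]

theorem setLIntegral_ball_rpow_neg_norm_le [NormedSpace ℝ E] [FiniteDimensional ℝ E]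
    [μ.IsAddHaarMeasure] {ζ : ℝ} (hζ : 0 ≤ ζ) {r R : ℝ} (hrR : r ≤ R) (hR : 1 ≤ R) :
    ∫⁻ x in ball 0 r, ENNReal.ofReal (‖x‖ ^ (-ζ)) ∂μ ≤
      ENNReal.ofReal (R ^ finrank ℝ E) *
        (∫⁻ x in ball 0 1, ENNReal.ofReal (‖x‖ ^ (-ζ)) ∂μ + μ (ball 0 1)) := by
  set B := ∫⁻ x in ball 0 1, ENNReal.ofReal (‖x‖ ^ (-ζ)) ∂μ
  have hRn : 1 ≤ ENNReal.ofReal (R ^ finrank ℝ E) := by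
    rw [← ENNReal.ofReal_one]
    exact ENNReal.ofReal_le_ofReal (one_le_pow₀ hR)
  have hpt : ∀ x : E, ENNReal.ofReal (‖x‖ ^ (-ζ)) ≤
      (ball 0 1).indicator (fun x => ENNReal.ofReal (‖x‖ ^ (-ζ))) x + 1 := by
    intro x
    by_cases hx : x ∈ ball (0 : E) 1
    · simp [hx]
    · rw [indicator_of_notMem hx, zero_add, ← ENNReal.ofReal_one]
      rw [mem_ball_zero_iff, not_lt] at hx
      exact ENNReal.ofReal_le_ofReal (Real.rpow_le_one_of_one_le_of_nonpos hx (by linarith))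
  calc ∫⁻ x in ball 0 r, ENNReal.ofReal (‖x‖ ^ (-ζ)) ∂μ
      ≤ ∫⁻ x in ball 0 r,
          ((ball 0 1).indicator (fun x => ENNReal.ofReal (‖x‖ ^ (-ζ))) x + 1) ∂μ :=
        lintegral_mono hpt
    _ ≤ B + μ (ball 0 R) := by
        rw [lintegral_add_right _ measurable_const, setLIntegral_one]
        gcongr
        exact (setLIntegral_le_lintegral _ _).trans_eq (lintegral_indicator measurableSet_ball _)
    _ = B + ENNReal.ofReal (R ^ finrank ℝ E) * μ (ball 0 1) := by
        rw [μ.addHaar_ball_of_pos _ (by linarith)]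
    _ ≤ ENNReal.ofReal (R ^ finrank ℝ E) * (B + μ (ball 0 1)) := by
        rw [mul_add]
        gcongr
        exact le_mul_of_one_le_left' hRn

theorem setLIntegral_ball_comp_add_right [μ.IsAddRightInvariant] (f : E → ℝ≥0∞) (w : E)
    (r : ℝ) : ∫⁻ x in ball (-w) r, f (x + w) ∂μ = ∫⁻ y in ball 0 r, f y ∂μ := by
  have hpre : (· + w) ⁻¹' ball (0 : E) r = ball (-w) r := by
    ext x
    simp [dist_eq_norm]
  rw [← hpre]
  exact (measurePreserving_add_right μ w).setLIntegral_comp_preimage_emb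
    (measurableEmbedding_addRight w) f _

theorem setLIntegral_compl_ball_rpow_neg_norm_add_mul_le {ζ r : ℝ} (hζ : 0 ≤ ζ) (hr : 0 < r)
    (g : E → ℝ) (w : E) :
    ∫⁻ x in (ball (-w) r)ᶜ, ENNReal.ofReal (‖x + w‖ ^ (-ζ) * g x) ∂μ ≤
      ENNReal.ofReal (r ^ (-ζ)) * ∫⁻ x, ENNReal.ofReal (g x) ∂μ := by
  calc ∫⁻ x in (ball (-w) r)ᶜ, ENNReal.ofReal (‖x + w‖ ^ (-ζ) * g x) ∂μ
      ≤ ∫⁻ x in (ball (-w) r)ᶜ, ENNReal.ofReal (r ^ (-ζ)) * ENNReal.ofReal (g x) ∂μ := by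
        refine setLIntegral_mono' measurableSet_ball.compl fun x hx => ?_
        rw [mem_compl_iff, mem_ball, dist_eq_norm, sub_neg_eq_add, not_lt] at hx
        rw [ENNReal.ofReal_mul (by positivity)]
        gcongr ?_ * _
        exact ENNReal.ofReal_le_ofReal (Real.rpow_le_rpow_of_nonpos hr hx (neg_nonpos.mpr hζ))
    _ ≤ ENNReal.ofReal (r ^ (-ζ)) * ∫⁻ x, ENNReal.ofReal (g x) ∂μ := by
        rw [lintegral_const_mul' _ _ ENNReal.ofReal_ne_top]
        gcongr
        exact Measure.restrict_le_self

theorem setLIntegral_ball_rpow_neg_norm_add_mul_le [μ.IsAddRightInvariant] {ζ r G : ℝ}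
    {g : E → ℝ} {w : E} (hg : ∀ x ∈ ball (-w) r, g x ≤ G) :
    ∫⁻ x in ball (-w) r, ENNReal.ofReal (‖x + w‖ ^ (-ζ) * g x) ∂μ ≤
      ENNReal.ofReal G * ∫⁻ y in ball 0 r, ENNReal.ofReal (‖y‖ ^ (-ζ)) ∂μ := by
  calc ∫⁻ x in ball (-w) r, ENNReal.ofReal (‖x + w‖ ^ (-ζ) * g x) ∂μ
      ≤ ∫⁻ x in ball (-w) r, ENNReal.ofReal (‖x + w‖ ^ (-ζ)) * ENNReal.ofReal G ∂μ := by
        refine setLIntegral_mono' measurableSet_ball fun x hx => ?_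
        rw [← ENNReal.ofReal_mul (by positivity)]
        gcongr
        exact hg x hx
    _ = ENNReal.ofReal G * ∫⁻ y in ball 0 r, ENNReal.ofReal (‖y‖ ^ (-ζ)) ∂μ := by
        rw [lintegral_mul_const' _ _ ENNReal.ofReal_ne_top, mul_comm,
          setLIntegral_ball_comp_add_right μ (fun y => ENNReal.ofReal (‖y‖ ^ (-ζ)))]

theorem lintegral_rpow_neg_norm_add_mul_le [μ.IsAddRightInvariant] {ζ r G : ℝ} (hζ : 0 ≤ ζ)
    (hr : 0 < r) {g : E → ℝ} {w : E} (hg : ∀ x ∈ ball (-w) r, g x ≤ G) :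
    ∫⁻ x, ENNReal.ofReal (‖x + w‖ ^ (-ζ) * g x) ∂μ ≤
      ENNReal.ofReal (r ^ (-ζ)) * ∫⁻ x, ENNReal.ofReal (g x) ∂μ +
        ENNReal.ofReal G * ∫⁻ y in ball 0 r, ENNReal.ofReal (‖y‖ ^ (-ζ)) ∂μ := by
  rw [← lintegral_add_compl _ measurableSet_ball, add_comm]
  exact add_le_add (setLIntegral_compl_ball_rpow_neg_norm_add_mul_le μ hζ hr g w)
    (setLIntegral_ball_rpow_neg_norm_add_mul_le μ hg)

end RpowNegNorm

theorem exp_neg_sq_norm_div_two_le_of_mem_ball {E : Type*} [SeminormedAddCommGroup E]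
    {x w : E} (h : x ∈ ball (-w) (‖w‖ / 2)) :
    Real.exp (-‖x‖ ^ 2 / 2) ≤ Real.exp (-‖w‖ ^ 2 / 8) := by
  rw [mem_ball, dist_eq_norm, sub_neg_eq_add] at h
  have hw : ‖w‖ ≤ ‖x + w‖ + ‖x‖ := by simpa using norm_sub_le (x + w) x
  have hx : ‖w‖ / 2 ≤ ‖x‖ := by linarith
  exact Real.exp_le_exp.mpr (by nlinarith [norm_nonneg w])

theorem pow_mul_exp_neg_sq_div_eight_le {n : ℕ} {ζ t : ℝ} (hζ : ζ ≤ n) (ht : 1 ≤ t) :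
    t ^ n * Real.exp (-t ^ 2 / 8) ≤ 8 ^ n * n.factorial * t ^ (-ζ) := by
  have ht0 : 0 < t := one_pos.trans_le ht
  have hpow : t ^ n ≤ (t ^ 2) ^ n * t ^ (-ζ) := by
    calc (t ^ n : ℝ) = t ^ ((n : ℝ) + ζ) * t ^ (-ζ) := by
          rw [← Real.rpow_add ht0, add_neg_cancel_right, Real.rpow_natCast]
      _ ≤ t ^ ((2 * n : ℕ) : ℝ) * t ^ (-ζ) := by
          gcongr
          push_cast
          linarith
      _ = (t ^ 2) ^ n * t ^ (-ζ) := by rw [Real.rpow_natCast, pow_mul]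
  have hexp : (t ^ 2) ^ n ≤ 8 ^ n * n.factorial * Real.exp (t ^ 2 / 8) := by
    have := Real.pow_div_factorial_le_exp (t ^ 2 / 8) (by positivity) n
    rw [div_pow, div_div, div_le_iff₀ (by positivity)] at this
    linarith
  have hcancel : Real.exp (t ^ 2 / 8) * Real.exp (-t ^ 2 / 8) = 1 := by
    rw [← Real.exp_add, neg_div, add_neg_cancel, Real.exp_zero]
  calc t ^ n * Real.exp (-t ^ 2 / 8)
      ≤ 8 ^ n * n.factorial * Real.exp (t ^ 2 / 8) * t ^ (-ζ) * Real.exp (-t ^ 2 / 8) := by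
        gcongr
        exact hpow.trans (by gcongr)
    _ = 8 ^ n * n.factorial * t ^ (-ζ) * (Real.exp (t ^ 2 / 8) * Real.exp (-t ^ 2 / 8)) := by
        ring
    _ = 8 ^ n * n.factorial * t ^ (-ζ) := by rw [hcancel, mul_one]

theorem ofReal_exp_mul_setLIntegral_ball_half_rpow_neg_norm_le {E : Type*}
    [NormedAddCommGroup E] [NormedSpace ℝ E] [FiniteDimensional ℝ E] [MeasurableSpace E]
    [BorelSpace E] (μ : Measure E) [μ.IsAddHaarMeasure] {ζ t : ℝ} (hζ0 : 0 ≤ ζ)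
    (hζ : ζ ≤ finrank ℝ E) (ht : 1 ≤ t) :
    ENNReal.ofReal (Real.exp (-t ^ 2 / 8)) *
        ∫⁻ x in ball 0 (t / 2), ENNReal.ofReal (‖x‖ ^ (-ζ)) ∂μ ≤
      ENNReal.ofReal (t ^ (-ζ)) * (ENNReal.ofReal (8 ^ finrank ℝ E * (finrank ℝ E).factorial) *
        (∫⁻ x in ball 0 1, ENNReal.ofReal (‖x‖ ^ (-ζ)) ∂μ + μ (ball 0 1))) := by
  have ht0 : 0 < t := one_pos.trans_le ht
  grw [setLIntegral_ball_rpow_neg_norm_le μ hζ0 (half_le_self ht0.le) ht, ← mul_assoc,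
    ← mul_assoc, ← ENNReal.ofReal_mul (by positivity), ← ENNReal.ofReal_mul (by positivity),
    mul_comm (Real.exp _), pow_mul_exp_neg_sq_div_eight_le hζ ht, mul_comm (t ^ (-ζ))]

theorem integrable_exp_neg_sq_norm_div_two {V : Type*} [NormedAddCommGroup V]
    [InnerProductSpace ℝ V] [FiniteDimensional ℝ V] [MeasurableSpace V] [BorelSpace V] :
    Integrable (fun x : V => Real.exp (-‖x‖ ^ 2 / 2)) := by
  convert (GaussianFourier.integrable_cexp_neg_mul_sq_norm_add (V := V) (b := 1 / 2)
    (by norm_num) 0 0).re using 2 with x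
  have hexponent : -(1 / 2 : ℂ) * ‖x‖ ^ 2 + 0 * ((inner ℝ (0 : V) x : ℝ) : ℂ) =
      ((-‖x‖ ^ 2 / 2 : ℝ) : ℂ) := by
    push_cast
    ring
  rw [hexponent, ← Complex.ofReal_exp, RCLike.re_to_complex, Complex.ofReal_re]

theorem ENNReal.exists_pos_forall_ofReal_mul_le {C : ℝ≥0∞} (hC : C ≠ ⊤) :
    ∃ c > (0 : ℝ), ∀ a : ℝ, 0 ≤ a → ENNReal.ofReal a * C ≤ ENNReal.ofReal (c * a) := by
  refine ⟨C.toReal + 1, by positivity, fun a ha => ?_⟩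
  rw [ENNReal.ofReal_mul (by positivity), mul_comm]
  gcongr
  exact (ENNReal.le_ofReal_iff_toReal_le hC (by positivity)).mpr (by linarith)

open Real in
/-- Gaussian integral bound: for `ζ ∈ (0,d)` there is `c = c(d,ζ) > 0` such that for all
`w` with `‖w‖ ≥ 1`, `∫ ‖x + w‖^{−ζ} (2π)^{−d/2} e^{−‖x‖²/2} dx ≤ c ‖w‖^{−ζ}`. -/
theorem stmt13 (d : ℕ) (ζ : ℝ) (hζ : ζ ∈ Set.Ioo (0:ℝ) (d:ℝ)) :
    ∃ c > (0:ℝ), ∀ w : EuclideanSpace ℝ (Fin d), 1 ≤ ‖w‖ →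
      (∫⁻ x : EuclideanSpace ℝ (Fin d),
          ENNReal.ofReal
            (‖x + w‖ ^ (-ζ) * ((2*Real.pi) ^ (-(d:ℝ)/2) * Real.exp (-‖x‖^2/2))))
        ≤ ENNReal.ofReal (c * ‖w‖ ^ (-ζ)) := by
  obtain ⟨hζ0, hζd⟩ := hζ
  have : Nonempty (Fin d) := ⟨⟨0, by exact_mod_cast hζ0.trans hζd⟩⟩
  set K : ℝ := (2 * π) ^ (-(d : ℝ) / 2)
  set Cg := ∫⁻ x : EuclideanSpace ℝ (Fin d), ENNReal.ofReal (K * exp (-‖x‖ ^ 2 / 2))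
  set B := ∫⁻ x in ball (0 : EuclideanSpace ℝ (Fin d)) 1, ENNReal.ofReal (‖x‖ ^ (-ζ))
  set C := ENNReal.ofReal (2 ^ ζ) * Cg + ENNReal.ofReal K *
    (ENNReal.ofReal (8 ^ d * d.factorial) * (B + volume (ball (0 : EuclideanSpace ℝ (Fin d)) 1)))
  have hC : C ≠ ⊤ := by
    have hCg : Cg ≠ ⊤ := (integrable_exp_neg_sq_norm_div_two.const_mul K).lintegral_lt_top.ne
    have hB : B ≠ ⊤ :=
      (integrableOn_ball_rpow_neg_norm volume (by simpa using hζd) 1).lintegral_lt_top.ne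
    have hV : volume (ball (0 : EuclideanSpace ℝ (Fin d)) 1) ≠ ⊤ := measure_ball_lt_top.ne
    finiteness
  obtain ⟨c, hc, hCc⟩ := ENNReal.exists_pos_forall_ofReal_mul_le hC
  refine ⟨c, hc, fun w hw => ?_⟩
  have hw0 : 0 < ‖w‖ := one_pos.trans_le hw
  have hgauss : ∀ x ∈ ball (-w) (‖w‖ / 2), K * exp (-‖x‖ ^ 2 / 2) ≤ K * exp (-‖w‖ ^ 2 / 8) :=
    fun x hx =>
      mul_le_mul_of_nonneg_left (exp_neg_sq_norm_div_two_le_of_mem_ball hx) (by positivity)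
  calc _ ≤ ENNReal.ofReal ((‖w‖ / 2) ^ (-ζ)) * Cg + ENNReal.ofReal K *
        (ENNReal.ofReal (exp (-‖w‖ ^ 2 / 8)) *
          ∫⁻ y in ball (0 : EuclideanSpace ℝ (Fin d)) (‖w‖ / 2), ENNReal.ofReal (‖y‖ ^ (-ζ))) := by
        grw [lintegral_rpow_neg_norm_add_mul_le volume hζ0.le (half_pos hw0) hgauss,
          ENNReal.ofReal_mul (by positivity), mul_assoc]
    _ ≤ ENNReal.ofReal (‖w‖ ^ (-ζ)) * C := by
        grw [ofReal_exp_mul_setLIntegral_ball_half_rpow_neg_norm_le volume hζ0.le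
          (by simpa using hζd.le) hw, div_rpow hw0.le two_pos.le, rpow_neg two_pos.le,
          div_inv_eq_mul, ENNReal.ofReal_mul (by positivity)]
        simp only [finrank_euclideanSpace_fin, C]
        exact le_of_eq (by ring)
    _ ≤ ENNReal.ofReal (c * ‖w‖ ^ (-ζ)) := hCc _ (by positivity)
end
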